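/- For a subordinator X and every fixed a > 0, the process t ↦ U(a - X_t) 1{X_t < a} is a supermartingale with respect to the natural filtration of X, where U is the renewal function of X. -/

import Mathlib

open MeasureTheory ProbabilityTheory Filter Set
open scoped ENNReal NNReal Topology

/-- A subordinator: a Lévy process with non-decreasing right-continuous paths,
issued from the origin (and extended by `0` to negative times). -/
structure Subordinator (Ω : Type*) [MeasurableSpace Ω] (P : Measure Ω) where
  X : ℝ → Ω → ℝ
  meas : ∀ t, Measurable (X t)
  zero_of_nonpos : ∀ t : ℝ, t ≤ 0 → ∀ ω, X t ω = 0
  mono : ∀ ω, Monotone fun t => X t ω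
  rightCont : ∀ ω t, ContinuousWithinAt (fun s => X s ω) (Set.Ici t) t
  stationary : ∀ s t : ℝ, 0 ≤ s → 0 ≤ t →
      Measure.map (fun ω => X (s + t) ω - X s ω) P = Measure.map (X t) P
  indep : ∀ (n : ℕ) (ts : Fin (n + 1) → ℝ), Monotone ts →
      iIndepFun
        (fun i : Fin n => fun ω => X (ts i.succ) ω - X (ts i.castSucc) ω) P

/-- The `q`-potential function `U^(q)(x) = ∫₀^∞ e^{-qt} P(X_t ≤ x) dt` of a subordinator. -/
noncomputable def qPotential {Ω : Type*} [MeasurableSpace Ω] (P : Measure Ω)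
    (S : Subordinator Ω P) (q x : ℝ) : ℝ≥0∞ :=
  ∫⁻ t in Set.Ioi (0 : ℝ), ENNReal.ofReal (Real.exp (-q * t)) * P {ω | S.X t ω ≤ x}

/-!
Since `U` is non-decreasing and the paths of `X` are non-decreasing, the process
`Y_t = U(a - X_t) 1{X_t < a}` is pathwise non-increasing, and it is bounded by `U(a)` because
`X_t ≥ 0`. For an adapted integrable process with non-increasing paths and `s ≤ t`,
monotonicity of conditional expectation gives `E[Y_t | ℱ_s] ≤ E[Y_s | ℱ_s] = Y_s`.
-/

theorem supermartingale_of_antitone {ι Ω : Type*} [Preorder ι] {m0 : MeasurableSpace Ω}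
    {μ : Measure Ω} {ℱ : Filtration ι m0} [SigmaFiniteFiltration μ ℱ] {f : ι → Ω → ℝ}
    (hadp : StronglyAdapted ℱ f) (hint : ∀ i, Integrable (f i) μ) (hf : Antitone f) :
    Supermartingale f ℱ μ := by
  refine ⟨hadp, fun i j hij => ?_, hint⟩
  calc μ[f j | ℱ i]
      ≤ᵐ[μ] μ[f i | ℱ i] := condExp_mono (hint j) (hint i) (.of_forall (hf hij))
    _ = f i := condExp_of_stronglyMeasurable (ℱ.le i) (hadp i) (hint i)

theorem qPotential_mono {Ω : Type*} [MeasurableSpace Ω] (P : Measure Ω) (S : Subordinator Ω P)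
    (q : ℝ) : Monotone (qPotential P S q) := fun _ _ hxy =>
  lintegral_mono fun _ => mul_le_mul_right (measure_mono fun _ hω => le_trans hω hxy) _

theorem antitone_ite_lt_toReal_sub {F : ℝ → ℝ≥0∞} (hF : Monotone F) (hfin : ∀ x, F x ≠ ⊤)
    (a : ℝ) : Antitone fun x => if x < a then (F (a - x)).toReal else 0 := by
  intro x y hxy
  by_cases hy : y < a
  · simp only [hy, hxy.trans_lt hy, if_true]
    exact ENNReal.toReal_mono (hfin _) (hF (by linarith))
  · simp only [hy, if_false]
    split_ifs <;> positivity

namespace Subordinator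

variable {Ω : Type*} [MeasurableSpace Ω] {P : Measure Ω} (S : Subordinator Ω P)

theorem nonneg (t : ℝ) (ω : Ω) : 0 ≤ S.X t ω :=
  (S.zero_of_nonpos _ (min_le_right t 0) ω).symm.le.trans (S.mono ω (min_le_left t 0))

abbrev naturalFiltration : Filtration ℝ ‹MeasurableSpace Ω› :=
  Filtration.natural S.X fun t => (S.meas t).stronglyMeasurable

theorem stronglyAdapted_comp {g : ℝ → ℝ} (hg : Measurable g) :
    StronglyAdapted S.naturalFiltration fun t ω => g (S.X t ω) := fun t =>
  (hg.comp (Filtration.stronglyAdapted_natural (u := S.X) _ t).measurable).stronglyMeasurable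

theorem supermartingale_comp_antitone [IsFiniteMeasure P] {g : ℝ → ℝ} (hg : Antitone g)
    (hg0 : ∀ x, 0 ≤ g x) : Supermartingale (fun t ω => g (S.X t ω)) S.naturalFiltration P := by
  have hadp := S.stronglyAdapted_comp hg.measurable
  refine supermartingale_of_antitone hadp (fun t => ?_) fun s t hst ω => hg (S.mono ω hst)
  refine (integrable_const (g 0)).mono'
    ((hadp t).mono (S.naturalFiltration.le t)).aestronglyMeasurable (.of_forall fun ω => ?_)
  rw [Real.norm_of_nonneg (hg0 _)]
  exact hg (S.nonneg t ω)

end Subordinator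

theorem renewal_supermartingale_general {Ω : Type*} [MeasurableSpace Ω] (P : Measure Ω)
    [IsProbabilityMeasure P] (S : Subordinator Ω P)
    (hfin : ∀ x : ℝ, qPotential P S 0 x ≠ ⊤)
    (a : ℝ) :
    Supermartingale
      (fun (t : ℝ) (ω : Ω) =>
        if S.X t ω < a then (qPotential P S 0 (a - S.X t ω)).toReal else 0)
      (MeasureTheory.Filtration.natural S.X fun t => (S.meas t).stronglyMeasurable) P := by
  refine S.supermartingale_comp_antitone
    (g := fun x => if x < a then (qPotential P S 0 (a - x)).toReal else 0)
    (antitone_ite_lt_toReal_sub (qPotential_mono P S 0) hfin a) fun x => ?_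
  split_ifs <;> positivity

/-- for every `a > 0`, the process `t ↦ U(a - X_t) 1{X_t < a}` is a
supermartingale with respect to the natural filtration of the subordinator `X`,
where `U = U^(0)` is the renewal function (assumed finite). -/
theorem renewal_supermartingale {Ω : Type*} [MeasurableSpace Ω] (P : Measure Ω)
    [IsProbabilityMeasure P] (S : Subordinator Ω P)
    (hfin : ∀ x : ℝ, qPotential P S 0 x ≠ ⊤)
    (a : ℝ) (ha : 0 < a) :
    Supermartingale
      (fun (t : ℝ) (ω : Ω) =>
        if S.X t ω < a then (qPotential P S 0 (a - S.X t ω)).toReal else 0)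
      (MeasureTheory.Filtration.natural S.X fun t => (S.meas t).stronglyMeasurable) P :=
  renewal_supermartingale_general P S hfin a
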